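/- The algebraic Birkhoff decomposition is unique: if H is a connected graded Hopf algebra, A = A₊ ⊕ A₋ a vector space splitting of a commutative algebra with 1 ∈ A₊, and φ a character admitting two decompositions φ = (f⁻)^{⋆−1} ⋆ f⁺ = (g⁻)^{⋆−1} ⋆ g⁺ with f^±, g^± characters mapping the augmentation ideal into A_± respectively, then f⁺ = g⁺ and f⁻ = g⁻. -/

import Mathlib

open TensorProduct

/-- The convolution product `f ⋆ g = m_A ∘ (f ⊗ g) ∘ Δ_H`. -/
noncomputable def convProd {K H A : Type*} [CommSemiring K] [Semiring H] [HopfAlgebra K H]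
    [Semiring A] [Algebra K A] (f g : H →ₗ[K] A) : H →ₗ[K] A :=
  (LinearMap.mul' K A) ∘ₗ (TensorProduct.map f g) ∘ₗ Coalgebra.comul

/-!
In the convolution ring, a character's inverse is its composite with the antipode, so
`D := f⁻ - g⁻` satisfies `D ⋆ φ = f⁺ - g⁺`. If `D` vanishes in degrees below `n`, then on `𝒜 n`
only the `𝒜 n ⊗ 𝒜 0` part of the coproduct contributes to `D ⋆ φ`, and on `𝒜 0 = K·1` the
character `φ` agrees with the convolution unit `η ∘ ε`, so `(D ⋆ φ) x = D x` lies in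
`A₊ ∩ A₋ = 0`. By induction on the degree `D = 0`, hence `f⁻ = g⁻` and `f⁺ = f⁻ ⋆ φ = g⁺`.
Homogeneous elements of positive degree lie in the augmentation ideal: with `πₖ` the degree
projections, both `(ε ⊗ ε ∘ π₀) Δ` and `(ε ∘ πₙ ⊗ ε) Δ` only see the `𝒜 n ⊗ 𝒜 0` part of `Δ x`
for `x ∈ 𝒜 n`, so `ε x = ε (πₙ x) = ε (π₀ x) = 0` when `n ≠ 0`.
-/

open Coalgebra WithConv

theorem toConv_convProd {K H A : Type*} [CommSemiring K] [Semiring H] [HopfAlgebra K H]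
    [Semiring A] [Algebra K A] (f g : H →ₗ[K] A) :
    toConv (convProd f g) = toConv f * toConv g :=
  rfl

section Characters

open HopfAlgebra

variable {R H A : Type*} [CommSemiring R] [Semiring A] [Algebra R A]

theorem AlgHom.eq_convOne_of_mem_span_one [Semiring H] [Bialgebra R H] (f : H →ₐ[R] A)
    {b : H} (hb : b ∈ Submodule.span R {1}) :
    f b = (1 : WithConv (H →ₗ[R] A)) b := by
  obtain ⟨c, rfl⟩ := Submodule.mem_span_singleton.mp hb
  simp [Algebra.smul_def]

variable [Semiring H] [HopfAlgebra R H]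

theorem AlgHom.toConv_mul_toConv_comp_antipode (f : H →ₐ[R] A) :
    toConv (f : H →ₗ[R] A) * toConv ((f : H →ₗ[R] A) ∘ₗ antipode R) = 1 := by
  have h := LinearMap.algHom_comp_convMul_distrib f (toConv LinearMap.id) (toConv (antipode R))
  rw [LinearMap.id_mul_antipode] at h
  apply WithConv.ofConv_injective
  refine h.symm.trans ?_
  ext
  simp

theorem convMul_eq_of_convProd_antipode_eq {f g φ : H →ₐ[R] A}
    (h : convProd ((f : H →ₗ[R] A) ∘ₗ antipode R) (g : H →ₗ[R] A) = φ) :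
    toConv (f : H →ₗ[R] A) * toConv (φ : H →ₗ[R] A) = toConv (g : H →ₗ[R] A) := by
  rw [← h, toConv_convProd, ← mul_assoc, f.toConv_mul_toConv_comp_antipode, one_mul]

end Characters

section Projection

variable {R M : Type*} [CommSemiring R] [AddCommMonoid M] [Module R M]

noncomputable def gradedProj {𝒜 : ℕ → Submodule R M} (h : DirectSum.IsInternal 𝒜) (n : ℕ) :
    M →ₗ[R] M :=
  (𝒜 n).subtype ∘ₗ DirectSum.component R ℕ (fun i => 𝒜 i) n ∘ₗ
    (LinearEquiv.ofBijective (DirectSum.coeLinearMap 𝒜) h).symm.toLinearMap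

variable {𝒜 : ℕ → Submodule R M} (h : DirectSum.IsInternal 𝒜) {x : M}

theorem gradedProj_of_mem {n : ℕ} (hx : x ∈ 𝒜 n) : gradedProj h n x = x := by
  simp only [gradedProj, LinearMap.comp_apply, LinearEquiv.coe_coe, Submodule.coe_subtype]
  rw [← DirectSum.apply_eq_component, h.ofBijective_coeLinearMap_of_mem hx]

theorem gradedProj_of_mem_of_ne {m n : ℕ} (hx : x ∈ 𝒜 m) (hmn : m ≠ n) :
    gradedProj h n x = 0 := by
  simp only [gradedProj, LinearMap.comp_apply, LinearEquiv.coe_coe, Submodule.coe_subtype]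
  rw [← DirectSum.apply_eq_component, h.ofBijective_coeLinearMap_of_mem_ne hmn hx]
  rfl

end Projection

section Graded

variable {R C A : Type*} [CommSemiring R] [AddCommMonoid C] [Module R C] [Coalgebra R C]
  [Semiring A] [Algebra R A]

def IsGradedComul (𝒜 : ℕ → Submodule R C) : Prop :=
  ∀ n : ℕ, ∀ x ∈ 𝒜 n, comul (R := R) x ∈
    ⨆ (p : ℕ × ℕ) (_ : p.1 + p.2 = n),
      LinearMap.range (TensorProduct.map (𝒜 p.1).subtype (𝒜 p.2).subtype)

variable {𝒜 : ℕ → Submodule R C}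

theorem IsGradedComul.convMul_apply_eq
    (hΔ : IsGradedComul 𝒜) {f g f' g' : WithConv (C →ₗ[R] A)} {n : ℕ}
    (h : ∀ p q, p + q = n → ∀ a ∈ 𝒜 p, ∀ b ∈ 𝒜 q, f a * g b = f' a * g' b)
    {x : C} (hx : x ∈ 𝒜 n) : (f * g) x = (f' * g') x := by
  have hle : (⨆ (p : ℕ × ℕ) (_ : p.1 + p.2 = n),
      LinearMap.range (TensorProduct.map (𝒜 p.1).subtype (𝒜 p.2).subtype)) ≤
      LinearMap.eqLocus (LinearMap.mul' R A ∘ₗ TensorProduct.map f.ofConv g.ofConv)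
        (LinearMap.mul' R A ∘ₗ TensorProduct.map f'.ofConv g'.ofConv) := by
    refine iSup₂_le fun p hp => ?_
    rintro _ ⟨t, rfl⟩
    induction t using TensorProduct.induction_on with
    | zero => simp
    | tmul a b => simpa using h p.1 p.2 hp a a.2 b b.2
    | add s t hs ht => simp_all
  exact hle (hΔ n x hx)

theorem IsGradedComul.counit_eq_zero (hΔ : IsGradedComul 𝒜) (h𝒜 : DirectSum.IsInternal 𝒜)
    {n : ℕ} (hn : n ≠ 0) {x : C} (hx : x ∈ 𝒜 n) : counit (R := R) x = 0 := by
  have key := hΔ.convMul_apply_eq (f := 1) (g := toConv (counit ∘ₗ gradedProj h𝒜 0))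
    (f' := toConv (counit ∘ₗ gradedProj h𝒜 n)) (g' := 1) ?_ hx
  · simpa [gradedProj_of_mem h𝒜 hx, gradedProj_of_mem_of_ne h𝒜 hx hn] using key.symm
  intro p q hpq a ha b hb
  rcases eq_or_ne q 0 with rfl | hq
  · obtain rfl : p = n := by omega
    simp [gradedProj_of_mem h𝒜 ha, gradedProj_of_mem h𝒜 hb]
  · simp [gradedProj_of_mem_of_ne h𝒜 ha (show p ≠ n by omega), gradedProj_of_mem_of_ne h𝒜 hb hq]

theorem IsGradedComul.convMul_apply_of_forall_lt
    (hΔ : IsGradedComul 𝒜) {D ψ : WithConv (C →ₗ[R] A)} {n : ℕ}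
    (hD : ∀ m < n, ∀ y ∈ 𝒜 m, D y = 0) (hψ : ∀ b ∈ 𝒜 0, ψ b = (1 : WithConv (C →ₗ[R] A)) b)
    {x : C} (hx : x ∈ 𝒜 n) : (D * ψ) x = D x := by
  conv_rhs => rw [← mul_one D]
  refine hΔ.convMul_apply_eq (fun p q hpq a ha b hb => ?_) hx
  rcases eq_or_ne q 0 with rfl | hq
  · rw [hψ b hb]
  · rw [hD p (by omega) a ha, zero_mul, zero_mul]

theorem IsGradedComul.eq_zero_of_convMul_mem (hΔ : IsGradedComul 𝒜)
    (h𝒜 : DirectSum.IsInternal 𝒜) {P M : Submodule R A}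
    (hPM : Disjoint P M) {D ψ : WithConv (C →ₗ[R] A)}
    (hψ : ∀ b ∈ 𝒜 0, ψ b = (1 : WithConv (C →ₗ[R] A)) b) (hD₀ : ∀ b ∈ 𝒜 0, D b = 0)
    (hDM : ∀ n ≠ 0, ∀ x ∈ 𝒜 n, D x ∈ M) (hDψP : ∀ n ≠ 0, ∀ x ∈ 𝒜 n, (D * ψ) x ∈ P) :
    D = 0 := by
  have homogeneous : ∀ n, ∀ x ∈ 𝒜 n, D x = 0 := by
    intro n
    induction n using Nat.strong_induction_on with
    | _ n ih =>
      intro x hx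
      rcases eq_or_ne n 0 with rfl | hn
      · exact hD₀ x hx
      have hP : D x ∈ P := hΔ.convMul_apply_of_forall_lt ih hψ hx ▸ hDψP n hn x hx
      exact (Submodule.disjoint_def.mp hPM) _ hP (hDM n hn x hx)
  apply WithConv.ofConv_injective
  refine LinearMap.eqLocus_eq_top.mp (eq_top_iff.mpr ?_)
  rw [← h𝒜.submodule_iSup_eq_top]
  exact iSup_le fun n x hx => homogeneous n x hx

end Graded

theorem birkhoff_decomposition_unique_general
    (K : Type*) [Field K]
    (H : Type*) [Semiring H] [HopfAlgebra K H]
    (𝒜 : ℕ → Submodule K H) (hinternal : DirectSum.IsInternal 𝒜)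
    (hconn : 𝒜 0 = Submodule.span K {(1 : H)})
    (hΔ : ∀ n : ℕ, ∀ x ∈ 𝒜 n, Coalgebra.comul (R := K) x ∈
      ⨆ (p : ℕ × ℕ) (_ : p.1 + p.2 = n),
        LinearMap.range (TensorProduct.map (𝒜 p.1).subtype (𝒜 p.2).subtype))
    (A : Type*) [CommRing A] [Algebra K A]
    (Ap Am : Submodule K A) (hcompl : IsCompl Ap Am)
    (φ fp fm gp gm : H →ₐ[K] A)
    (hfp : ∀ x : H, Coalgebra.counit (R := K) x = 0 → fp x ∈ Ap)
    (hfm : ∀ x : H, Coalgebra.counit (R := K) x = 0 → fm x ∈ Am)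
    (hgp : ∀ x : H, Coalgebra.counit (R := K) x = 0 → gp x ∈ Ap)
    (hgm : ∀ x : H, Coalgebra.counit (R := K) x = 0 → gm x ∈ Am)
    (hf : convProd ((fm : H →ₗ[K] A) ∘ₗ HopfAlgebra.antipode (R := K)) (fp : H →ₗ[K] A)
            = (φ : H →ₗ[K] A))
    (hg : convProd ((gm : H →ₗ[K] A) ∘ₗ HopfAlgebra.antipode (R := K)) (gp : H →ₗ[K] A)
            = (φ : H →ₗ[K] A)) :
    fp = gp ∧ fm = gm := by
  have hΔ : IsGradedComul 𝒜 := hΔ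
  have hunit (χ : H →ₐ[K] A) (b : H) (hb : b ∈ 𝒜 0) : χ b = (1 : WithConv (H →ₗ[K] A)) b :=
    χ.eq_convOne_of_mem_span_one (hconn ▸ hb)
  have hε (n : ℕ) (hn : n ≠ 0) (x : H) (hx : x ∈ 𝒜 n) : counit (R := K) x = 0 :=
    hΔ.counit_eq_zero hinternal hn hx
  have hfφ := convMul_eq_of_convProd_antipode_eq hf
  have hgφ := convMul_eq_of_convProd_antipode_eq hg
  have hm : toConv (fm : H →ₗ[K] A) = toConv (gm : H →ₗ[K] A) := by
    refine sub_eq_zero.mp (hΔ.eq_zero_of_convMul_mem hinternal hcompl.disjoint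
      (ψ := toConv (φ : H →ₗ[K] A)) (hunit φ)
      (fun b hb => ?_) (fun n hn x hx => ?_) (fun n hn x hx => ?_))
    · simp [hunit fm b hb, hunit gm b hb]
    · exact Am.sub_mem (hfm x (hε n hn x hx)) (hgm x (hε n hn x hx))
    · rw [sub_mul, hfφ, hgφ]
      exact Ap.sub_mem (hfp x (hε n hn x hx)) (hgp x (hε n hn x hx))
  have hp : toConv (fp : H →ₗ[K] A) = toConv (gp : H →ₗ[K] A) := by rw [← hfφ, ← hgφ, hm]
  exact ⟨AlgHom.ext fun x => congr($hp x), AlgHom.ext fun x => congr($hm x)⟩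

/-- Uniqueness of the algebraic Birkhoff decomposition: if `H` is a connected
graded Hopf algebra, `A = A₊ ⊕ A₋` a vector-space splitting of a commutative algebra with
`1 ∈ A₊`, and `φ` a character admitting two decompositions
`φ = (f⁻)^{⋆-1} ⋆ f⁺ = (g⁻)^{⋆-1} ⋆ g⁺` (with `(h)^{⋆-1} = h ∘ S`) where `f^±, g^±` are
characters mapping the augmentation ideal into `A₊` resp. `A₋`, then `f⁺ = g⁺` and
`f⁻ = g⁻`. -/
theorem birkhoff_decomposition_unique
    (K : Type*) [Field K]
    (H : Type*) [Semiring H] [HopfAlgebra K H]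
    (𝒜 : ℕ → Submodule K H) (hinternal : DirectSum.IsInternal 𝒜)
    (hconn : 𝒜 0 = Submodule.span K {(1 : H)})
    (hΔ : ∀ n : ℕ, ∀ x ∈ 𝒜 n, Coalgebra.comul (R := K) x ∈
      ⨆ (p : ℕ × ℕ) (_ : p.1 + p.2 = n),
        LinearMap.range (TensorProduct.map (𝒜 p.1).subtype (𝒜 p.2).subtype))
    (A : Type*) [CommRing A] [Algebra K A]
    (Ap Am : Submodule K A) (hcompl : IsCompl Ap Am) (h1A : (1 : A) ∈ Ap)
    (φ fp fm gp gm : H →ₐ[K] A)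
    (hfp : ∀ x : H, Coalgebra.counit (R := K) x = 0 → fp x ∈ Ap)
    (hfm : ∀ x : H, Coalgebra.counit (R := K) x = 0 → fm x ∈ Am)
    (hgp : ∀ x : H, Coalgebra.counit (R := K) x = 0 → gp x ∈ Ap)
    (hgm : ∀ x : H, Coalgebra.counit (R := K) x = 0 → gm x ∈ Am)
    (hf : convProd ((fm : H →ₗ[K] A) ∘ₗ HopfAlgebra.antipode (R := K)) (fp : H →ₗ[K] A)
            = (φ : H →ₗ[K] A))
    (hg : convProd ((gm : H →ₗ[K] A) ∘ₗ HopfAlgebra.antipode (R := K)) (gp : H →ₗ[K] A)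
            = (φ : H →ₗ[K] A)) :
    fp = gp ∧ fm = gm :=
  birkhoff_decomposition_unique_general K H 𝒜 hinternal hconn hΔ A Ap Am hcompl φ fp fm gp gm hfp
    hfm hgp hgm hf hg
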